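/- Let f: ℝ^n → ℝ be differentiable with M-Lipschitz gradient and let E be a matrix with smallest singular value σ_min > 0 (full column rank, so E^T has trivial kernel on the relevant subspace) and largest singular value σ_max. If E^T w = -(∇f(x) - ∇f(y)) - ρ E^T F z for vectors w, z and a matrix F, where w lies in the column space of E (so that ||E^T w||² ≥ σ_min² ||w||²), then for any ν > 1, (1/ρ)||w||² ≤ (ν M² / (ρ(ν-1)σ_min²)) ||x - y||² + (ν ρ σ_max²/σ_min²) ||F z||². -/

import Mathlib

open Matrix

lemma dps_nonneg {k : ℕ} (a : Fin k → ℝ) : 0 ≤ a ⬝ᵥ a :=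
  Finset.sum_nonneg fun i _ => mul_self_nonneg _

lemma young_dot {k : ℕ} (a b : Fin k → ℝ) (t : ℝ) (ht : 0 < t) :
    2 * (a ⬝ᵥ b) ≤ t * (a ⬝ᵥ a) + (1 / t) * (b ⬝ᵥ b) := by
  have h0 : (0 : ℝ) ≤ (t • a - b) ⬝ᵥ (t • a - b) := dps_nonneg _
  have hexp : (t • a - b) ⬝ᵥ (t • a - b)
      = t * t * (a ⬝ᵥ a) - 2 * t * (a ⬝ᵥ b) + (b ⬝ᵥ b) := by
    simp [sub_dotProduct, dotProduct_sub, smul_dotProduct, dotProduct_smul,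
      dotProduct_comm b a]
    ring
  rw [hexp] at h0
  rw [← sub_nonneg]
  have hrw : t * (a ⬝ᵥ a) + (1 / t) * (b ⬝ᵥ b) - 2 * (a ⬝ᵥ b)
      = (t * t * (a ⬝ᵥ a) - 2 * t * (a ⬝ᵥ b) + (b ⬝ᵥ b)) / t := by
    field_simp; ring
  rw [hrw]
  exact div_nonneg h0 ht.le

lemma sum_sq_bound {k : ℕ} (a b : Fin k → ℝ) (ν : ℝ) (hν : 1 < ν) :
    (a + b) ⬝ᵥ (a + b) ≤ (ν / (ν - 1)) * (a ⬝ᵥ a) + ν * (b ⬝ᵥ b) := by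
  have hν1 : (0:ℝ) < ν - 1 := by linarith
  have ht : (0:ℝ) < 1 / (ν - 1) := by positivity
  have h := young_dot a b (1 / (ν - 1)) ht
  have hexp : (a + b) ⬝ᵥ (a + b)
      = (a ⬝ᵥ a) + 2 * (a ⬝ᵥ b) + (b ⬝ᵥ b) := by
    simp [add_dotProduct, dotProduct_add, dotProduct_comm b a]
    ring
  rw [hexp]
  have h1 : (1:ℝ) / (1 / (ν - 1)) = ν - 1 := by field_simp
  rw [h1] at h
  have h2 : ν / (ν - 1) = 1 + 1 / (ν - 1) := by field_simp; ring
  rw [h2]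
  nlinarith [dps_nonneg a, dps_nonneg b]

/-- Bound (49) on the dual variable gap: if `Eᵀ w = -(∇f(x) - ∇f(y)) - ρ Eᵀ v`
with `w` in the column space of `E`, `∇f` (denoted `g`) `M`-Lipschitz, and
`σ_min, σ_max` lower/upper bounds for the singular values of `E`, then for `ν > 1`,
`(1/ρ)‖w‖² ≤ (ν M²/(ρ(ν-1)σ_min²)) ‖x - y‖² + (ν ρ σ_max²/σ_min²) ‖v‖²`. -/
theorem dual_gap_upper_bound (N n : ℕ)
    (E : Matrix (Fin N) (Fin n) ℝ)
    (g : (Fin n → ℝ) → (Fin n → ℝ)) (M : ℝ) (hM : 0 < M)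
    (hLip : ∀ x y : Fin n → ℝ,
      (g x - g y) ⬝ᵥ (g x - g y) ≤ M ^ 2 * ((x - y) ⬝ᵥ (x - y)))
    (σmin σmax : ℝ) (hσmin : 0 < σmin)
    (hmin : ∀ u : Fin N → ℝ, (∃ t, u = E.mulVec t) →
      σmin ^ 2 * (u ⬝ᵥ u) ≤ (E.transpose.mulVec u) ⬝ᵥ (E.transpose.mulVec u))
    (hmax : ∀ u : Fin N → ℝ,
      (E.transpose.mulVec u) ⬝ᵥ (E.transpose.mulVec u) ≤ σmax ^ 2 * (u ⬝ᵥ u))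
    (ρ ν : ℝ) (hρ : 0 < ρ) (hν : 1 < ν)
    (x y : Fin n → ℝ) (w v : Fin N → ℝ)
    (hw : ∃ t, w = E.mulVec t)
    (heq : E.transpose.mulVec w = -(g x - g y) - ρ • E.transpose.mulVec v) :
    (1 / ρ) * (w ⬝ᵥ w) ≤
      (ν * M ^ 2 / (ρ * (ν - 1) * σmin ^ 2)) * ((x - y) ⬝ᵥ (x - y))
        + (ν * ρ * σmax ^ 2 / σmin ^ 2) * (v ⬝ᵥ v) := by
  set a : Fin n → ℝ := -(g x - g y) with ha
  set b : Fin n → ℝ := -(ρ • E.transpose.mulVec v) with hb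
  have heq' : E.transpose.mulVec w = a + b := by
    rw [heq]; simp [ha, hb, sub_eq_add_neg]
  have h1 : σmin ^ 2 * (w ⬝ᵥ w) ≤ (ν / (ν - 1)) * (a ⬝ᵥ a) + ν * (b ⬝ᵥ b) := by
    calc σmin ^ 2 * (w ⬝ᵥ w) ≤ (E.transpose.mulVec w) ⬝ᵥ (E.transpose.mulVec w) :=
          hmin w hw
      _ = (a + b) ⬝ᵥ (a + b) := by rw [heq']
      _ ≤ _ := sum_sq_bound a b ν hν
  have haa : a ⬝ᵥ a ≤ M ^ 2 * ((x - y) ⬝ᵥ (x - y)) := by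
    have h : a ⬝ᵥ a = (g x - g y) ⬝ᵥ (g x - g y) := by
      rw [ha, neg_dotProduct, dotProduct_neg, neg_neg]
    rw [h]; exact hLip x y
  have hbb : b ⬝ᵥ b ≤ ρ ^ 2 * (σmax ^ 2 * (v ⬝ᵥ v)) := by
    have h : b ⬝ᵥ b = ρ ^ 2 * ((E.transpose.mulVec v) ⬝ᵥ (E.transpose.mulVec v)) := by
      rw [hb, neg_dotProduct, dotProduct_neg, neg_neg, smul_dotProduct, dotProduct_smul,
        smul_eq_mul, smul_eq_mul]
      ring
    rw [h]
    have := hmax v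
    nlinarith [sq_nonneg ρ]
  have hν1 : (0:ℝ) < ν - 1 := by linarith
  have hνpos : (0:ℝ) < ν := by linarith
  have key : σmin ^ 2 * (w ⬝ᵥ w) ≤ (ν / (ν - 1)) * (M ^ 2 * ((x - y) ⬝ᵥ (x - y)))
      + ν * (ρ ^ 2 * (σmax ^ 2 * (v ⬝ᵥ v))) := by
    have hd : 0 < ν / (ν - 1) := by positivity
    nlinarith
  rw [div_mul_eq_mul_div, div_mul_eq_mul_div, div_mul_eq_mul_div, div_add_div _ _
    (by positivity : (ρ * (ν - 1) * σmin ^ 2 : ℝ) ≠ 0) (by positivity : (σmin ^ 2 : ℝ) ≠ 0),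
    div_le_div_iff₀ (by positivity) (by positivity)]
  have key2 : (ν - 1) * (σmin ^ 2 * (w ⬝ᵥ w)) ≤ ν * (M ^ 2 * ((x - y) ⬝ᵥ (x - y)))
      + (ν - 1) * (ν * (ρ ^ 2 * (σmax ^ 2 * (v ⬝ᵥ v)))) := by
    have h := mul_le_mul_of_nonneg_left key (le_of_lt hν1)
    have hdiv : (ν - 1) * (ν / (ν - 1)) = ν := by field_simp
    rw [mul_add, ← mul_assoc (ν - 1) (ν / (ν - 1)), hdiv] at h
    linarith
  nlinarith [mul_le_mul_of_nonneg_left key2 (show (0:ℝ) ≤ ρ * σmin ^ 2 by positivity)]
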